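/- Let p, q be probability densities and w a weight function with ∫pw ∈ (0,1) and ∫qw ∈ (0,1), such that x ↦ w(x)·q(x)·log q(x) is μ-integrable and x ↦ w(x)·q(x)·log p(x) is quasi-integrable with ∫ w·q·log p dμ < ∞. Then the censored likelihood rule is strictly locally proper: ∫_X S^{CSL}(p,x;w)·q(x) dμ(x) ≥ ∫_X S^{CSL}(q,x;w)·q(x) dμ(x) (in the extended reals), with equality if and only if p = q μ-a.e. on {w > 0}. -/

import Mathlib

open MeasureTheory
open scoped ENNReal

noncomputable section

/-- A probability density with respect to `μ`. -/
def IsDensity {X : Type*} [MeasurableSpace X] (μ : Measure X) (p : X → ℝ) : Prop :=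
  Measurable p ∧ (∀ x, 0 ≤ p x) ∧ ∫ x, p x ∂μ = 1

/-- A weight function: measurable with values in `[0,1]`. -/
def IsWeight {X : Type*} [MeasurableSpace X] (w : X → ℝ) : Prop :=
  Measurable w ∧ ∀ x, w x ∈ Set.Icc (0 : ℝ) 1

/-- The extended-real logarithm of a real number: `log r` for `r > 0`, and `−∞`
for `r ≤ 0`. -/
def elog (r : ℝ) : EReal := if r ≤ 0 then ⊥ else ((Real.log r : ℝ) : EReal)

/-- The positive part of an extended real, as an extended nonnegative real. -/
def epos (e : EReal) : ℝ≥0∞ := if e = ⊤ then ⊤ else ENNReal.ofReal e.toReal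

/-- The quasi-integral of an extended-real-valued function: positive part minus
negative part (each a lower Lebesgue integral). -/
def eintE {X : Type*} [MeasurableSpace X] (μ : Measure X) (f : X → EReal) : EReal :=
  ((∫⁻ x, epos (f x) ∂μ : ℝ≥0∞) : EReal) - ((∫⁻ x, epos (-f x) ∂μ : ℝ≥0∞) : EReal)

/-- The renormalized density `p_w(x) = w(x)·p(x) / ∫ p·w dμ`. -/
def renorm {X : Type*} [MeasurableSpace X] (μ : Measure X) (p w : X → ℝ) : X → ℝ :=
  fun x => w x * p x / ∫ y, p y * w y ∂μ

/-- The censored likelihood rule `S^CSL(p,x;w) = −w(x)·log p(x) − (1−w(x))·log(1−∫pw)`,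
with values in the extended reals (so that `−log p(x) = +∞` when `p(x) = 0`, and
`0·log 0 = 0`). -/
def SCSLe {X : Type*} [MeasurableSpace X] (μ : Measure X) (p w : X → ℝ) (x : X) : EReal :=
  -((w x : ℝ) : EReal) * elog (p x)
    + (((-(1 - w x) * Real.log (1 - ∫ y, p y * w y ∂μ) : ℝ)) : EReal)

/-!
After censoring, the difference of the two expected scores is the Kullback–Leibler divergence
between the censored distributions: the measure `q w μ` on `X` together with an atom of mass
`1 - ∫ q w`, against `p w μ` with an atom of mass `1 - ∫ p w`. It is therefore bounded below by
integrating Gibbs' inequality `a (log a - log b) ≥ a - b` over `X` and adding it at the atom;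
the terms `a - b` sum to zero, and equality forces `q w = p w` almost everywhere. In the extended
reals, the integrability of `(w q log p)⁺` keeps the negative part of the score of `p` finite, so
its expected score is either `+∞` (for instance when `p` vanishes on a non-null part of
`{w > 0, q > 0}`) or an honest real integral.
-/

open Real

lemma sub_le_mul_log_sub_log {a b : ℝ} (ha : 0 < a) (hb : 0 < b) :
    a - b ≤ a * (log a - log b) := by
  have h := one_sub_inv_le_log_of_pos (div_pos ha hb)
  rw [inv_div, log_div ha.ne' hb.ne'] at h
  calc a - b = a * (1 - b / a) := by field_simp
    _ ≤ a * (log a - log b) := mul_le_mul_of_nonneg_left h ha.le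

lemma sub_lt_mul_log_sub_log {a b : ℝ} (ha : 0 < a) (hb : 0 < b) (hab : a ≠ b) :
    a - b < a * (log a - log b) := by
  have h := log_lt_sub_one_of_pos (div_pos hb ha) (by rwa [ne_eq, div_eq_one_iff_eq ha.ne', eq_comm])
  rw [log_div hb.ne' ha.ne'] at h
  calc a - b = a * (1 - b / a) := by field_simp
    _ < a * (log a - log b) := mul_lt_mul_of_pos_left (by linarith) ha

lemma mul_sub_mul_le_mul_log_sub_log {w a b : ℝ} (hw : 0 ≤ w) (ha : 0 ≤ a) (hb : 0 ≤ b)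
    (hpos : 0 < w → 0 < a → 0 < b) :
    a * w - b * w ≤ w * a * log a - w * a * log b := by
  rcases hw.eq_or_lt with rfl | hw
  · simp
  rcases ha.eq_or_lt with rfl | ha
  · simp only [zero_mul, mul_zero, zero_sub, sub_zero, neg_nonpos]
    positivity
  nlinarith [sub_le_mul_log_sub_log ha (hpos hw ha)]

lemma mul_sub_mul_lt_mul_log_sub_log {w a b : ℝ} (hw : 0 < w) (ha : 0 ≤ a) (hb : 0 ≤ b)
    (hpos : 0 < a → 0 < b) (hab : a ≠ b) :
    a * w - b * w < w * a * log a - w * a * log b := by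
  rcases ha.eq_or_lt with rfl | ha
  · simp only [zero_mul, mul_zero, zero_sub, sub_zero, neg_neg_iff_pos]
    exact mul_pos (hb.lt_of_ne hab) hw
  nlinarith [sub_lt_mul_log_sub_log ha (hpos ha) hab]

section

variable {X : Type*} [MeasurableSpace X] {μ : Measure X}

lemma integral_mul_sub_le_integral_mul_log_sub_log {p q w : X → ℝ} (hp : ∀ x, 0 ≤ p x)
    (hq : ∀ x, 0 ≤ q x) (hw : ∀ x, 0 ≤ w x) (hpos : ∀ᵐ x ∂μ, 0 < w x → 0 < q x → 0 < p x)
    (hpw : Integrable (fun x => p x * w x) μ) (hqw : Integrable (fun x => q x * w x) μ)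
    (hqq : Integrable (fun x => w x * q x * log (q x)) μ)
    (hqp : Integrable (fun x => w x * q x * log (p x)) μ) :
    ∫ x, q x * w x ∂μ - ∫ x, p x * w x ∂μ
        ≤ ∫ x, w x * q x * log (q x) ∂μ - ∫ x, w x * q x * log (p x) ∂μ ∧
      (∫ x, q x * w x ∂μ - ∫ x, p x * w x ∂μ
          = ∫ x, w x * q x * log (q x) ∂μ - ∫ x, w x * q x * log (p x) ∂μ →
        ∀ᵐ x ∂μ, 0 < w x → p x = q x) := by
  set G := fun x => w x * q x * log (q x) - w x * q x * log (p x) - (q x * w x - p x * w x)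
  have hG_int : Integrable G μ := (hqq.sub hqp).sub (hqw.sub hpw)
  have hG_eq : ∫ x, G x ∂μ = (∫ x, w x * q x * log (q x) ∂μ - ∫ x, w x * q x * log (p x) ∂μ)
      - (∫ x, q x * w x ∂μ - ∫ x, p x * w x ∂μ) := by
    rw [← integral_sub hqq hqp, ← integral_sub hqw hpw]
    exact integral_sub (hqq.sub hqp) (hqw.sub hpw)
  have hG_nonneg : 0 ≤ᵐ[μ] G := by
    filter_upwards [hpos] with x hx
    have := mul_sub_mul_le_mul_log_sub_log (hw x) (hq x) (hp x) hx
    simp only [G, Pi.zero_apply]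
    linarith
  refine ⟨by linarith [integral_nonneg_of_ae hG_nonneg], fun heq => ?_⟩
  have hG_zero : G =ᵐ[μ] 0 := (integral_eq_zero_iff_of_nonneg_ae hG_nonneg hG_int).mp (by linarith)
  filter_upwards [hG_zero, hpos] with x hx hposx hwx
  by_contra hne
  have := mul_sub_mul_lt_mul_log_sub_log hwx (hq x) (hp x) (hposx hwx) (Ne.symm hne)
  simp only [G, Pi.zero_apply] at hx
  linarith

lemma epos_coe (r : ℝ) : epos (r : EReal) = ENNReal.ofReal r := by
  simp [epos]

lemma eintE_congr {f g : X → EReal} (h : f =ᵐ[μ] g) : eintE μ f = eintE μ g := by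
  unfold eintE
  rw [lintegral_congr_ae (h.mono fun x hx => congrArg epos hx),
    lintegral_congr_ae (h.mono fun x hx => congrArg (fun e => epos (-e)) hx)]

lemma eintE_eq_top {f : X → EReal} (hpos : ∫⁻ x, epos (f x) ∂μ = ⊤)
    (hneg : ∫⁻ x, epos (-f x) ∂μ ≠ ⊤) : eintE μ f = ⊤ := by
  unfold eintE
  rw [hpos, EReal.coe_ennreal_top]
  exact EReal.top_sub (by simpa using hneg)

lemma eintE_coe_of_integrable {r : X → ℝ} (hr : Integrable r μ) :
    eintE μ (fun x => (r x : EReal)) = ((∫ x, r x ∂μ : ℝ) : EReal) := by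
  have hfin : ∀ f : X → ℝ, Integrable f μ → ∫⁻ x, ENNReal.ofReal (f x) ∂μ ≠ ⊤ := fun f hf =>
    ((lintegral_mono fun x => Real.ofReal_le_enorm (f x)).trans_lt hf.2).ne
  unfold eintE
  simp only [← EReal.coe_neg, epos_coe]
  rw [integral_eq_lintegral_pos_part_sub_lintegral_neg_part hr, EReal.coe_sub,
    ← EReal.coe_ennreal_toReal (hfin r hr), ← EReal.coe_ennreal_toReal (hfin (fun x => -r x) hr.neg)]

lemma eintE_coe_of_not_integrable {r : X → ℝ} (hr : AEStronglyMeasurable r μ)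
    (hneg : ∫⁻ x, epos (-(r x : EReal)) ∂μ ≠ ⊤) (hint : ¬Integrable r μ) :
    eintE μ (fun x => (r x : EReal)) = ⊤ := by
  refine eintE_eq_top ?_ hneg
  simp only [← EReal.coe_neg, epos_coe] at hneg ⊢
  by_contra hpos
  refine hint ⟨hr, ?_⟩
  have hsplit : ∀ x, ‖r x‖ₑ = ENNReal.ofReal (r x) + ENNReal.ofReal (-r x) := fun x => by
    rw [Real.enorm_eq_ofReal_abs]
    rcases le_total 0 (r x) with h | h
    · rw [abs_of_nonneg h, ENNReal.ofReal_of_nonpos (neg_nonpos.mpr h), add_zero]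
    · rw [abs_of_nonpos h, ENNReal.ofReal_of_nonpos h, zero_add]
  rw [hasFiniteIntegral_def, lintegral_congr hsplit, lintegral_add_left' hr.aemeasurable.ennreal_ofReal]
  exact ENNReal.add_lt_top.mpr ⟨lt_top_iff_ne_top.2 hpos, lt_top_iff_ne_top.2 hneg⟩

lemma IsDensity.integrable {p : X → ℝ} (hp : IsDensity μ p) : Integrable p μ :=
  Integrable.of_integral_ne_zero (by rw [hp.2.2]; exact one_ne_zero)

lemma IsDensity.integrable_mul_weight {p w : X → ℝ} (hp : IsDensity μ p) (hw : IsWeight w) :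
    Integrable (fun x => p x * w x) μ :=
  hp.integrable.mul_bdd (c := 1) hw.1.aestronglyMeasurable (ae_of_all _ fun x => by
    rw [Real.norm_eq_abs, abs_le]; constructor <;> linarith [(hw.2 x).1, (hw.2 x).2])

/-- The censored likelihood score computed with `Real.log`; it equals `SCSLe` only where `p > 0`
or the weight vanishes, since `Real.log 0 = 0`. -/
def SCSLreal (μ : Measure X) (p w : X → ℝ) (x : X) : ℝ :=
  -w x * log (p x) - (1 - w x) * log (1 - ∫ y, p y * w y ∂μ)

lemma SCSLe_mul_eq_coe {p q w : X → ℝ} {x : X} (h : q x = 0 ∨ w x = 0 ∨ 0 < p x) :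
    SCSLe μ p w x * (q x : EReal) = ((SCSLreal μ p w x * q x : ℝ) : EReal) := by
  rcases h with h | h | h
  · simp [h]
  · simp [SCSLe, SCSLreal, h]
  · rw [SCSLe, SCSLreal, elog, if_neg (not_le.mpr h)]
    norm_cast
    ring

lemma SCSLe_mul_eq_top {p q w : X → ℝ} {x : X} (hq : 0 < q x) (hw : 0 < w x) (hp : p x ≤ 0) :
    SCSLe μ p w x * (q x : EReal) = ⊤ := by
  rw [SCSLe, elog, if_pos hp, ← EReal.coe_neg, EReal.coe_mul_bot_of_neg (neg_neg_of_pos hw),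
    EReal.top_add_coe, EReal.top_mul_coe_of_pos hq]

lemma SCSLe_ae_congr {p q w : X → ℝ} (hw : ∀ x, 0 ≤ w x) (h : ∀ᵐ x ∂μ, 0 < w x → p x = q x) :
    SCSLe μ p w =ᵐ[μ] SCSLe μ q w := by
  have hmass : ∫ y, p y * w y ∂μ = ∫ y, q y * w y ∂μ := by
    refine integral_congr_ae (h.mono fun x hx => ?_)
    rcases (hw x).eq_or_lt with h0 | h0
    · simp [← h0]
    · simp [hx h0]
  filter_upwards [h] with x hx
  rcases (hw x).eq_or_lt with h0 | h0
  · simp [SCSLe, ← h0, hmass]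
  · simp [SCSLe, hx h0, hmass]

lemma SCSLreal_mul_eq (p q w : X → ℝ) (x : X) :
    SCSLreal μ p w x * q x = -(w x * q x * log (p x))
      + (log (1 - ∫ y, p y * w y ∂μ) * (q x * w x) - log (1 - ∫ y, p y * w y ∂μ) * q x) := by
  rw [SCSLreal]
  ring

lemma integrable_SCSLreal_mul_iff {p q w : X → ℝ} (hq : Integrable q μ)
    (hqw : Integrable (fun x => q x * w x) μ) :
    Integrable (fun x => SCSLreal μ p w x * q x) μ
      ↔ Integrable (fun x => w x * q x * log (p x)) μ := by
  simp_rw [SCSLreal_mul_eq p q w]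
  set c := log (1 - ∫ y, p y * w y ∂μ)
  have hmass : Integrable (fun x => c * (q x * w x) - c * q x) μ :=
    (hqw.const_mul c).sub (hq.const_mul c)
  rw [integrable_add_iff_integrable_left' hmass]
  exact integrable_neg_iff

lemma integral_SCSLreal_mul {p q w : X → ℝ} (hq : IsDensity μ q)
    (hqw : Integrable (fun x => q x * w x) μ) (hqp : Integrable (fun x => w x * q x * log (p x)) μ) :
    ∫ x, SCSLreal μ p w x * q x ∂μ = -∫ x, w x * q x * log (p x) ∂μ
      - (1 - ∫ y, q y * w y ∂μ) * log (1 - ∫ y, p y * w y ∂μ) := by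
  simp_rw [SCSLreal_mul_eq p q w]
  set c := log (1 - ∫ y, p y * w y ∂μ)
  have hmass : Integrable (fun x => c * (q x * w x) - c * q x) μ :=
    (hqw.const_mul c).sub (hq.integrable.const_mul c)
  rw [integral_add (f := fun x => -(w x * q x * log (p x))) hqp.neg hmass, integral_neg, integral_sub (hqw.const_mul c)
    (hq.integrable.const_mul c), integral_const_mul, integral_const_mul, hq.2.2]
  ring

lemma lintegral_epos_neg_SCSLe_mul_ne_top {p q w : X → ℝ} (hq : ∀ x, 0 ≤ q x) (hw : IsWeight w)
    (hpw : (∫ y, p y * w y ∂μ) ∈ Set.Icc (0 : ℝ) 1)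
    (hqp : Integrable (fun x => max (w x * q x * log (p x)) 0) μ) :
    ∫⁻ x, epos (-(SCSLe μ p w x * (q x : EReal))) ∂μ ≠ ⊤ := by
  have hlog : log (1 - ∫ y, p y * w y ∂μ) ≤ 0 := log_nonpos (by linarith [hpw.2]) (by linarith [hpw.1])
  have hbound : ∀ x, epos (-(SCSLe μ p w x * (q x : EReal)))
      ≤ ENNReal.ofReal (max (w x * q x * log (p x)) 0) := fun x => by
    by_cases hx : q x = 0 ∨ w x = 0 ∨ 0 < p x
    · rw [SCSLe_mul_eq_coe hx, ← EReal.coe_neg, epos_coe]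
      refine ENNReal.ofReal_le_ofReal ((?_ : _ ≤ w x * q x * log (p x)).trans (le_max_left _ 0))
      have := mul_nonneg (mul_nonneg (sub_nonneg.2 (hw.2 x).2) (hq x)) (neg_nonneg.2 hlog)
      rw [SCSLreal_mul_eq p q w x]
      linarith
    · simp only [not_or, not_lt] at hx
      rw [SCSLe_mul_eq_top ((hq x).lt_of_ne' hx.1) ((hw.2 x).1.lt_of_ne' hx.2.1) hx.2.2]
      simp [epos]
  exact ((lintegral_mono hbound).trans_lt hqp.lintegral_lt_top).ne

lemma eintE_SCSLe_mul_eq_top_or {p q w : X → ℝ} (hp : Measurable p) (hqm : Measurable q)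
    (hq : ∀ x, 0 ≤ q x) (hw : IsWeight w) (hpw : (∫ y, p y * w y ∂μ) ∈ Set.Icc (0 : ℝ) 1)
    (hqp : Integrable (fun x => max (w x * q x * log (p x)) 0) μ) :
    eintE μ (fun x => SCSLe μ p w x * (q x : EReal)) = ⊤ ∨
      ((∀ᵐ x ∂μ, 0 < w x → 0 < q x → 0 < p x) ∧
        Integrable (fun x => SCSLreal μ p w x * q x) μ ∧
        eintE μ (fun x => SCSLe μ p w x * (q x : EReal))
          = ((∫ x, SCSLreal μ p w x * q x ∂μ : ℝ) : EReal)) := by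
  have hneg := lintegral_epos_neg_SCSLe_mul_ne_top hq hw hpw hqp
  by_cases hpos : ∀ᵐ x ∂μ, 0 < w x → 0 < q x → 0 < p x
  · have hae : (fun x => SCSLe μ p w x * (q x : EReal))
        =ᵐ[μ] fun x => ((SCSLreal μ p w x * q x : ℝ) : EReal) := by
      filter_upwards [hpos] with x hx
      refine SCSLe_mul_eq_coe ?_
      rcases (hq x).eq_or_lt' with h | h
      · exact .inl h
      rcases (hw.2 x).1.eq_or_lt' with h' | h'
      · exact .inr (.inl h')
      · exact .inr (.inr (hx h' h))
    by_cases hint : Integrable (fun x => SCSLreal μ p w x * q x) μ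
    · exact .inr ⟨hpos, hint, (eintE_congr hae).trans (eintE_coe_of_integrable hint)⟩
    · refine .inl ((eintE_congr hae).trans (eintE_coe_of_not_integrable ?_ ?_ hint))
      · exact ((((hw.1.neg.mul hp.log).sub ((measurable_const.sub hw.1).mul_const _)).mul
          hqm).aestronglyMeasurable)
      · rwa [lintegral_congr_ae (hae.mono fun x hx => congrArg (fun e => epos (-e)) hx)] at hneg
  · refine .inl (eintE_eq_top (top_unique ?_) hneg)
    rw [ae_iff] at hpos
    set N := {x | ¬(0 < w x → 0 < q x → 0 < p x)}
    have hN : MeasurableSet N := by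
      simp only [N, Classical.not_imp, not_lt]
      exact (measurableSet_lt measurable_const hw.1).inter
        ((measurableSet_lt measurable_const hqm).inter (measurableSet_le hp measurable_const))
    calc ⊤ = ∫⁻ _ in N, ⊤ ∂μ := by rw [setLIntegral_const, ENNReal.top_mul hpos]
      _ = ∫⁻ x in N, epos (SCSLe μ p w x * (q x : EReal)) ∂μ := by
        refine setLIntegral_congr_fun hN fun x hx => ?_
        obtain ⟨hwx, hqx, hpx⟩ : 0 < w x ∧ 0 < q x ∧ p x ≤ 0 := by simpa [N] using hx
        rw [SCSLe_mul_eq_top hqx hwx hpx, epos, if_pos rfl]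
      _ ≤ _ := setLIntegral_le_lintegral _ _

lemma integral_SCSLreal_mul_le {p q w : X → ℝ} (hp : IsDensity μ p) (hq : IsDensity μ q)
    (hw : IsWeight w) (hpw : (∫ y, p y * w y ∂μ) < 1) (hqw : (∫ y, q y * w y ∂μ) < 1)
    (hpos : ∀ᵐ x ∂μ, 0 < w x → 0 < q x → 0 < p x)
    (hqq : Integrable (fun x => w x * q x * log (q x)) μ)
    (hqp : Integrable (fun x => w x * q x * log (p x)) μ) :
    ∫ x, SCSLreal μ q w x * q x ∂μ ≤ ∫ x, SCSLreal μ p w x * q x ∂μ ∧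
      (∫ x, SCSLreal μ p w x * q x ∂μ = ∫ x, SCSLreal μ q w x * q x ∂μ →
        ∀ᵐ x ∂μ, 0 < w x → p x = q x) := by
  have hqw_int := hq.integrable_mul_weight hw
  obtain ⟨hgibbs, hgibbs_eq⟩ := integral_mul_sub_le_integral_mul_log_sub_log hp.2.1 hq.2.1
    (fun x => (hw.2 x).1) hpos (hp.integrable_mul_weight hw) hqw_int hqq hqp
  have hatom := sub_le_mul_log_sub_log (sub_pos.2 hqw) (sub_pos.2 hpw)
  rw [integral_SCSLreal_mul hq hqw_int hqp, integral_SCSLreal_mul hq hqw_int hqq]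
  exact ⟨by linarith, fun h => hgibbs_eq (by linarith)⟩

end

theorem SCSL_strictly_locally_proper_general
    {X : Type*} [MeasurableSpace X] (μ : Measure X)
    (p q w : X → ℝ) (hp : IsDensity μ p) (hq : IsDensity μ q) (hw : IsWeight w)
    (hpw : (∫ y, p y * w y ∂μ) ∈ Set.Ioo (0 : ℝ) 1)
    (hqw : (∫ y, q y * w y ∂μ) ∈ Set.Ioo (0 : ℝ) 1)
    (hqq : Integrable (fun x => w x * q x * Real.log (q x)) μ)
    (hqp : Integrable (fun x => max (w x * q x * Real.log (p x)) 0) μ) :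
    eintE μ (fun x => SCSLe μ q w x * ((q x : ℝ) : EReal))
        ≤ eintE μ (fun x => SCSLe μ p w x * ((q x : ℝ) : EReal)) ∧
    (eintE μ (fun x => SCSLe μ p w x * ((q x : ℝ) : EReal))
        = eintE μ (fun x => SCSLe μ q w x * ((q x : ℝ) : EReal))
      ↔ ∀ᵐ x ∂μ, 0 < w x → p x = q x) := by
  have hq_int := hq.integrable
  have hqw_int := hq.integrable_mul_weight hw
  have hscore_q : eintE μ (fun x => SCSLe μ q w x * (q x : EReal))
      = ((∫ x, SCSLreal μ q w x * q x ∂μ : ℝ) : EReal) := by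
    refine (eintE_congr (ae_of_all _ fun x => SCSLe_mul_eq_coe ?_)).trans
      (eintE_coe_of_integrable ((integrable_SCSLreal_mul_iff hq_int hqw_int).2 hqq))
    rcases (hq.2.1 x).eq_or_lt' with h | h
    exacts [.inl h, .inr (.inr h)]
  have hcongr : (∀ᵐ x ∂μ, 0 < w x → p x = q x) → eintE μ (fun x => SCSLe μ p w x * (q x : EReal))
      = eintE μ (fun x => SCSLe μ q w x * (q x : EReal)) := fun h =>
    eintE_congr ((SCSLe_ae_congr (fun x => (hw.2 x).1) h).mul (ae_of_all _ fun _ => rfl))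
  rcases eintE_SCSLe_mul_eq_top_or hp.1 hq.1 hq.2.1 hw (Set.Ioo_subset_Icc_self hpw) hqp with
    htop | ⟨hpos, hint, hscore_p⟩
  · rw [htop, hscore_q] at hcongr ⊢
    exact ⟨le_top, ⟨fun h => (EReal.top_ne_coe _ h).elim, hcongr⟩⟩
  · obtain ⟨hle, heq⟩ := integral_SCSLreal_mul_le hp hq hw hpw.2 hqw.2 hpos hqq
      ((integrable_SCSLreal_mul_iff hq_int hqw_int).1 hint)
    rw [hscore_p, hscore_q] at hcongr ⊢
    exact ⟨EReal.coe_le_coe_iff.2 hle, ⟨fun h => heq (EReal.coe_injective h), hcongr⟩⟩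

/-- The censored likelihood rule is strictly locally proper:
the expected score of `p` under `q` is at least that of `q`, with equality iff
`p = q` μ-a.e. on `{w > 0}`. -/
theorem SCSL_strictly_locally_proper
    {X : Type*} [MeasurableSpace X] (μ : Measure X) [SigmaFinite μ]
    (p q w : X → ℝ) (hp : IsDensity μ p) (hq : IsDensity μ q) (hw : IsWeight w)
    (hpw : (∫ y, p y * w y ∂μ) ∈ Set.Ioo (0 : ℝ) 1)
    (hqw : (∫ y, q y * w y ∂μ) ∈ Set.Ioo (0 : ℝ) 1)
    (hqq : Integrable (fun x => w x * q x * Real.log (q x)) μ)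
    (hqp : Integrable (fun x => max (w x * q x * Real.log (p x)) 0) μ) :
    eintE μ (fun x => SCSLe μ q w x * ((q x : ℝ) : EReal))
        ≤ eintE μ (fun x => SCSLe μ p w x * ((q x : ℝ) : EReal)) ∧
    (eintE μ (fun x => SCSLe μ p w x * ((q x : ℝ) : EReal))
        = eintE μ (fun x => SCSLe μ q w x * ((q x : ℝ) : EReal))
      ↔ ∀ᵐ x ∂μ, 0 < w x → p x = q x) :=
  SCSL_strictly_locally_proper_general μ p q w hp hq hw hpw hqw hqq hqp

end
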